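/- Let T_1, …, T_{L−1} be nonnegative integers and suppose κ_m = −T_m for every 1 ≤ m ≤ L−1. Then for each 1 ≤ i ≤ N the Hamiltonian operator H_i preserves the subspace F(T_1, …, T_{L−1}) of ℂ[q] spanned by the monomials q^A = Π_{m,j} (q_m^{(j)})^{A_{m,j}} over (L−1)×N matrices A of nonnegative integers satisfying Σ_{j=1}^{N} A_{m,j} ≤ T_m for every 1 ≤ m ≤ L−1. -/

import Mathlib

/-!
Write `F(t)` for the span of the monomials whose row sums `∑ⱼ A m j` are bounded by `t m`. The
endomorphisms preserving `F(t)` form a subalgebra, so it suffices to place every building block of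
`z_i H_i` in it. The operators `q_m^{(i)} ∂_m^{(j)}` keep all row sums, derivatives lower them, and
`Q_0^{(i)}`, `Q_0^{(0)}`, `P_m^{(0)}` act diagonally on monomials. The only products raising a row
sum are `Q_m^{(i)} P_m^{(0)}`; since `κ_m = -T_m`, `P_m^{(0)}` acts on a monomial by the scalar
`(row sum) - T_m`, which kills exactly the monomials where multiplying by `q_m^{(i)}` would leave
`F(T)`. In the exchange terms `Q_m^{(i)} P_n^{(i)} Q_n^{(j)} P_m^{(j)}` with `m ≠ n` the raising
factor `q_m^{(i)}` commutes past `P_n^{(i)} Q_n^{(j)}` and pairs up with `∂_m^{(j)}`.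
-/

open MvPolynomial Finset

namespace Submodule

variable {R M : Type*} [CommSemiring R] [AddCommMonoid M] [Module R M]

def stabilizer (p : Submodule R M) : Subalgebra R (Module.End R M) where
  carrier := {f | p ≤ p.comap f}
  mul_mem' hf hg _ hx := hf (hg hx)
  add_mem' hf hg _ hx := p.add_mem (hf hx) (hg hx)
  algebraMap_mem' r _ hx := p.smul_mem r hx

end Submodule

namespace MvPolynomial

variable {R σ : Type*} [CommSemiring R]

theorem mem_stabilizer_restrictSupport {s : Set (σ →₀ ℕ)} {f : Module.End R (MvPolynomial σ R)}
    (h : ∀ d ∈ s, ∀ c, f (monomial d c) ∈ restrictSupport R s) :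
    f ∈ (restrictSupport R s).stabilizer := by
  intro p hp
  rw [Submodule.mem_comap, p.as_sum, map_sum]
  exact Submodule.sum_mem _ fun d hd => h d (hp hd) _

end MvPolynomial

section RowDegree

variable {α β : Type*} [Fintype β]

def rowSum (d : α × β →₀ ℕ) (a : α) : ℕ := ∑ b, d (a, b)

def rowBounded (t : α → ℕ) : Set (α × β →₀ ℕ) := {d | ∀ a, rowSum d a ≤ t a}

noncomputable def rowBoundedStabilizer (R : Type*) [CommSemiring R] (t : α → ℕ) :
    Subalgebra R (Module.End R (MvPolynomial (α × β) R)) :=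
  (restrictSupport R (rowBounded t)).stabilizer

theorem rowSum_add (d e : α × β →₀ ℕ) (a : α) : rowSum (d + e) a = rowSum d a + rowSum e a :=
  sum_add_distrib

theorem rowSum_single_one [DecidableEq α] (v : α × β) (a : α) :
    rowSum (Finsupp.single v 1) a = if v.1 = a then 1 else 0 := by
  classical
  by_cases h : v.1 = a
  · subst h
    simp [rowSum, Finsupp.single_apply, Prod.ext_iff]
  · simp [rowSum, Prod.ext_iff, h]

theorem rowSum_mono {d e : α × β →₀ ℕ} (h : d ≤ e) (a : α) : rowSum d a ≤ rowSum e a :=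
  sum_le_sum fun b _ => h (a, b)

end RowDegree

section Operators

variable {R α β : Type*} [CommSemiring R]

local notation "𝒫" => MvPolynomial (α × β) R

theorem mulLeft_X_mul_pderiv_monomial (v w : α × β) (d : α × β →₀ ℕ) (c : R) :
    (LinearMap.mulLeft R (X v) * (pderiv w).toLinearMap : Module.End R 𝒫) (monomial d c) =
      monomial (d - Finsupp.single w 1 + Finsupp.single v 1) (c * d w) := by
  simp [Derivation.coeFn_coe, X, monomial_mul, add_comm]

theorem commute_mulLeft_X_mulLeft_X (v w : α × β) :
    Commute (LinearMap.mulLeft R (X v) : Module.End R 𝒫) (LinearMap.mulLeft R (X w)) :=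
  LinearMap.ext fun f => by simp [mul_left_comm]

theorem commute_mulLeft_X_pderiv {v w : α × β} (h : v ≠ w) :
    Commute (LinearMap.mulLeft R (X v) : Module.End R 𝒫) (pderiv w).toLinearMap :=
  LinearMap.ext fun f => by simp [pderiv_X_of_ne h]

theorem pderiv_mul_mulLeft_X_self (v : α × β) :
    ((pderiv v).toLinearMap * LinearMap.mulLeft R (X v) : Module.End R 𝒫) =
      LinearMap.mulLeft R (X v) * (pderiv v).toLinearMap + 1 :=
  LinearMap.ext fun f => by simp [add_comm]

variable [Fintype β]

theorem pderiv_mem_stabilizer (t : α → ℕ) (w : α × β) :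
    (pderiv w).toLinearMap ∈ rowBoundedStabilizer R t := by
  refine mem_stabilizer_restrictSupport fun d hd c => ?_
  simp only [Derivation.coeFn_coe, pderiv_monomial, monomial_mem_restrictSupport]
  exact Or.inl fun a => (rowSum_mono tsub_le_self a).trans (hd a)

theorem mulLeft_X_mul_pderiv_mem_stabilizer (t : α → ℕ) {v w : α × β} (h : v.1 = w.1) :
    (LinearMap.mulLeft R (X v) * (pderiv w).toLinearMap : Module.End R 𝒫) ∈
      rowBoundedStabilizer R t := by
  classical
  refine mem_stabilizer_restrictSupport fun d hd c => ?_
  rw [mulLeft_X_mul_pderiv_monomial, monomial_mem_restrictSupport]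
  by_cases hw : d w = 0
  · simp [hw]
  refine Or.inl fun a => ?_
  have hd' : d - Finsupp.single w 1 + Finsupp.single w 1 = d :=
    tsub_add_cancel_of_le (Finsupp.single_le_iff.mpr (Nat.one_le_iff_ne_zero.mpr hw))
  have hrow := hd a
  rw [← hd', rowSum_add] at hrow
  rwa [rowSum_add, rowSum_single_one, h, ← rowSum_single_one]

theorem pderiv_mul_mulLeft_X_mem_stabilizer (t : α → ℕ) {v w : α × β} (h : v.1 = w.1) :
    ((pderiv w).toLinearMap * LinearMap.mulLeft R (X v) : Module.End R 𝒫) ∈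
      rowBoundedStabilizer R t := by
  obtain rfl | hvw := eq_or_ne v w
  · rw [pderiv_mul_mulLeft_X_self]
    exact add_mem (mulLeft_X_mul_pderiv_mem_stabilizer t rfl) (one_mem _)
  · rw [← (commute_mulLeft_X_pderiv hvw).eq]
    exact mulLeft_X_mul_pderiv_mem_stabilizer t h

noncomputable def eulerRow (a : α) : Module.End R 𝒫 :=
  ∑ b, LinearMap.mulLeft R (X (a, b)) * (pderiv (a, b)).toLinearMap

theorem eulerRow_monomial (a : α) (d : α × β →₀ ℕ) (c : R) :
    eulerRow a (monomial d c) = (rowSum d a : R) • monomial d c := by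
  simp only [eulerRow, LinearMap.sum_apply, Module.End.mul_apply,
    LinearMap.mulLeft_apply, Derivation.coeFn_coe, X_mul_pderiv_monomial, rowSum, Nat.cast_sum,
    Finset.sum_smul, Nat.cast_smul_eq_nsmul]

end Operators

theorem mulLeft_X_mul_eulerRow_sub_mem_stabilizer {R α β : Type*} [CommRing R] [Fintype β]
    (t : α → ℕ) (v : α × β) :
    (LinearMap.mulLeft R (X v) * (-(t v.1 : R) • 1 + eulerRow v.1) :
        Module.End R (MvPolynomial (α × β) R)) ∈ rowBoundedStabilizer R t := by
  classical
  refine mem_stabilizer_restrictSupport fun d hd c => ?_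
  obtain hlt | heq := (hd v.1).lt_or_eq
  · simp only [Module.End.mul_apply, LinearMap.add_apply, LinearMap.smul_apply,
      Module.End.one_apply, eulerRow_monomial, ← add_smul, LinearMap.mulLeft_apply, mul_smul_comm,
      X, monomial_mul, one_mul]
    refine Submodule.smul_mem _ _ ((monomial_mem_restrictSupport R).2 (Or.inl fun a => ?_))
    rw [add_comm, rowSum_add, rowSum_single_one]
    split_ifs with ha
    · exact ha ▸ hlt
    · exact hd a
  · simp [eulerRow_monomial, heq]

theorem Finset.sum_Icc_one_eq_sum_fin {M : Type*} [AddCommMonoid M] (f : ℕ → M) (n : ℕ) :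
    ∑ i ∈ Icc 1 n, f i = ∑ b : Fin n, f (b + 1) := by
  rw [Fin.sum_univ_eq_sum_range (fun k => f (k + 1)), range_eq_Ico, sum_Ico_add' f,
    Ico_add_one_right_eq_Icc, zero_add]

section FreeField

variable {R : Type*} [CommRing R] {L N : ℕ}

/-- The realization of the paper's `Q_m^{(i)}`, `P_m^{(i)}` on `R[q]`, with `q_m^{(i)}` the variable
`(m - 1, i - 1)`. -/
structure IsFreeFieldRealization (θ κ : ℕ → R)
    (Q P : ℕ → ℕ → Module.End R (MvPolynomial (Fin (L - 1) × Fin N) R)) : Prop where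
  Q_eq : ∀ m i (hm : 1 ≤ m) (hmL : m ≤ L - 1) (hi : 1 ≤ i) (hiN : i ≤ N),
    Q m i = LinearMap.mulLeft R (X (⟨m - 1, by omega⟩, ⟨i - 1, by omega⟩))
  P_eq : ∀ m i (hm : 1 ≤ m) (hmL : m ≤ L - 1) (hi : 1 ≤ i) (hiN : i ≤ N),
    P m i = (pderiv (⟨m - 1, by omega⟩, ⟨i - 1, by omega⟩)).toLinearMap
  Q_zero : ∀ i, 1 ≤ i → i ≤ N → Q 0 i = θ i • 1 + ∑ m ∈ Icc 1 (L - 1), Q m i * P m i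
  P_zero : ∀ i, 1 ≤ i → i ≤ N → P 0 i = -1
  Q_site_zero : ∀ m, 1 ≤ m → m ≤ L - 1 → Q m 0 = -1
  P_site_zero : ∀ m, 1 ≤ m → m ≤ L - 1 → P m 0 = κ m • 1 + ∑ i ∈ Icc 1 N, Q m i * P m i
  Q_zero_zero : Q 0 0 = (κ 0 - ∑ i ∈ Icc 1 N, θ i) • 1 -
    ∑ i ∈ Icc 1 N, ∑ m ∈ Icc 1 (L - 1), Q m i * P m i
  P_zero_zero : P 0 0 = -1

namespace IsFreeFieldRealization

variable {θ κ : ℕ → R} {Q P : ℕ → ℕ → Module.End R (MvPolynomial (Fin (L - 1) × Fin N) R)}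
  {T : ℕ → ℕ}

local notation "𝒮" => rowBoundedStabilizer R (fun a : Fin (L - 1) => T (a + 1))

theorem Q_mul_P_mem_of_pos (h : IsFreeFieldRealization θ κ Q P) {m a b : ℕ} (hm : 1 ≤ m)
    (hmL : m ≤ L - 1) (ha : 1 ≤ a) (haN : a ≤ N) (hb : 1 ≤ b) (hbN : b ≤ N) :
    Q m a * P m b ∈ 𝒮 := by
  rw [h.Q_eq m a hm hmL ha haN, h.P_eq m b hm hmL hb hbN]
  exact mulLeft_X_mul_pderiv_mem_stabilizer _ rfl

theorem Q_zero_mem (h : IsFreeFieldRealization θ κ Q P) {a : ℕ} (ha : 1 ≤ a) (haN : a ≤ N) :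
    Q 0 a ∈ 𝒮 := by
  rw [h.Q_zero a ha haN]
  refine add_mem (Subalgebra.smul_mem _ (one_mem _) _) (sum_mem fun m hm => ?_)
  obtain ⟨hm1, hmL⟩ := mem_Icc.mp hm
  exact h.Q_mul_P_mem_of_pos hm1 hmL ha haN ha haN

theorem Q_zero_zero_mem (h : IsFreeFieldRealization θ κ Q P) : Q 0 0 ∈ 𝒮 := by
  rw [h.Q_zero_zero]
  refine sub_mem (Subalgebra.smul_mem _ (one_mem _) _) (sum_mem fun a ha => sum_mem fun m hm => ?_)
  obtain ⟨ha1, haN⟩ := mem_Icc.mp ha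
  obtain ⟨hm1, hmL⟩ := mem_Icc.mp hm
  exact h.Q_mul_P_mem_of_pos hm1 hmL ha1 haN ha1 haN

theorem P_site_zero_mem (h : IsFreeFieldRealization θ κ Q P) {m : ℕ} (hm : 1 ≤ m)
    (hmL : m ≤ L - 1) : P m 0 ∈ 𝒮 := by
  rw [h.P_site_zero m hm hmL]
  refine add_mem (Subalgebra.smul_mem _ (one_mem _) _) (sum_mem fun a ha => ?_)
  obtain ⟨ha1, haN⟩ := mem_Icc.mp ha
  exact h.Q_mul_P_mem_of_pos hm hmL ha1 haN ha1 haN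

theorem sum_Q_mul_P_eq_eulerRow (h : IsFreeFieldRealization θ κ Q P) {m : ℕ} (hm : 1 ≤ m)
    (hmL : m ≤ L - 1) : ∑ i ∈ Icc 1 N, Q m i * P m i =
      eulerRow (β := Fin N) ⟨m - 1, by omega⟩ := by
  rw [sum_Icc_one_eq_sum_fin, eulerRow]
  refine sum_congr rfl fun b _ => ?_
  rw [h.Q_eq m _ hm hmL (by omega) b.isLt, h.P_eq m _ hm hmL (by omega) b.isLt]
  simp

theorem Q_mul_P_site_zero_mem (h : IsFreeFieldRealization θ κ Q P) {m a : ℕ} (hm : 1 ≤ m)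
    (hmL : m ≤ L - 1) (ha : 1 ≤ a) (haN : a ≤ N) (hκ : κ m = -(T m : R)) :
    Q m a * P m 0 ∈ 𝒮 := by
  rw [h.Q_eq m a hm hmL ha haN, h.P_site_zero m hm hmL, h.sum_Q_mul_P_eq_eulerRow hm hmL, hκ]
  convert mulLeft_X_mul_eulerRow_sub_mem_stabilizer _
    ((⟨m - 1, by omega⟩, ⟨a - 1, by omega⟩) : Fin (L - 1) × Fin N) using 6
  rw [Nat.sub_add_cancel hm]

theorem Q_mul_P_mem (h : IsFreeFieldRealization θ κ Q P)
    (hκ : ∀ m, 1 ≤ m → m ≤ L - 1 → κ m = -(T m : R)) {m a b : ℕ} (hm : m < L) (ha : a ≤ N)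
    (hb : b ≤ N) : Q m a * P m b ∈ 𝒮 := by
  obtain rfl | hm1 := Nat.eq_zero_or_pos m
  · have hP : P 0 b = -1 := by
      obtain rfl | hb1 := Nat.eq_zero_or_pos b
      exacts [h.P_zero_zero, h.P_zero b hb1 hb]
    refine mul_mem ?_ (hP ▸ neg_mem (one_mem _))
    obtain rfl | ha1 := Nat.eq_zero_or_pos a
    exacts [h.Q_zero_zero_mem, h.Q_zero_mem ha1 ha]
  have hmL : m ≤ L - 1 := by omega
  obtain rfl | ha1 := Nat.eq_zero_or_pos a
  · refine mul_mem (h.Q_site_zero m hm1 hmL ▸ neg_mem (one_mem _)) ?_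
    obtain rfl | hb1 := Nat.eq_zero_or_pos b
    · exact h.P_site_zero_mem hm1 hmL
    · rw [h.P_eq m b hm1 hmL hb1 hb]
      exact pderiv_mem_stabilizer _ _
  obtain rfl | hb1 := Nat.eq_zero_or_pos b
  · exact h.Q_mul_P_site_zero_mem hm1 hmL ha1 ha (hκ m hm1 hmL)
  · exact h.Q_mul_P_mem_of_pos hm1 hmL ha1 ha hb1 hb

theorem P_mul_Q_mem (h : IsFreeFieldRealization θ κ Q P) {n a b : ℕ} (hn : n < L) (ha : 1 ≤ a)
    (haN : a ≤ N) (hb : 1 ≤ b) (hbN : b ≤ N) : P n a * Q n b ∈ 𝒮 := by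
  obtain rfl | hn1 := Nat.eq_zero_or_pos n
  · exact mul_mem (h.P_zero a ha haN ▸ neg_mem (one_mem _)) (h.Q_zero_mem hb hbN)
  · rw [h.P_eq n a hn1 (by omega) ha haN, h.Q_eq n b hn1 (by omega) hb hbN]
    exact pderiv_mul_mulLeft_X_mem_stabilizer _ rfl

theorem commute_Q_P_mul_Q (h : IsFreeFieldRealization θ κ Q P) {m n i j : ℕ} (hm : 1 ≤ m)
    (hmL : m < L) (hn : n < L) (hmn : m ≠ n) (hi : 1 ≤ i) (hiN : i ≤ N) (hj : 1 ≤ j)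
    (hjN : j ≤ N) (hij : i ≠ j) : Commute (Q m i) (P n i * Q n j) := by
  rw [h.Q_eq m i hm (by omega) hi hiN]
  obtain rfl | hn1 := Nat.eq_zero_or_pos n
  · rw [h.P_zero i hi hiN, h.Q_zero j hj hjN]
    refine .mul_right (.neg_one_right (R := Module.End R (MvPolynomial _ R)) _) <|
      ((Commute.one_right _).smul_right _).add_right <| Commute.sum_right _ _ _ fun k hk => ?_
    obtain ⟨hk1, hkL⟩ := mem_Icc.mp hk
    rw [h.Q_eq k j hk1 hkL hj hjN, h.P_eq k j hk1 hkL hj hjN]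
    exact (commute_mulLeft_X_mulLeft_X _ _).mul_right
      (commute_mulLeft_X_pderiv (by simp [Prod.ext_iff, Fin.ext_iff]; omega))
  · rw [h.P_eq n i hn1 (by omega) hi hiN, h.Q_eq n j hn1 (by omega) hj hjN]
    exact (commute_mulLeft_X_pderiv (by simp [Prod.ext_iff, Fin.ext_iff]; omega)).mul_right
      (commute_mulLeft_X_mulLeft_X _ _)

theorem Q_mul_P_mul_Q_mul_P_mem (h : IsFreeFieldRealization θ κ Q P)
    (hκ : ∀ m, 1 ≤ m → m ≤ L - 1 → κ m = -(T m : R)) {m n i j : ℕ} (hm : m < L) (hn : n < L)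
    (hi : i ≤ N) (hj : j ≤ N) : Q m i * P m j * Q n j * P n i ∈ 𝒮 := by
  rw [mul_assoc (Q m i * P m j)]
  exact mul_mem (h.Q_mul_P_mem hκ hm hi hj) (h.Q_mul_P_mem hκ hn hj hi)

theorem Q_mul_P_mul_Q_mul_P_mem_of_ne (h : IsFreeFieldRealization θ κ Q P)
    (hκ : ∀ m, 1 ≤ m → m ≤ L - 1 → κ m = -(T m : R)) {m n i j : ℕ} (hm : m < L) (hn : n < L)
    (hi : 1 ≤ i) (hiN : i ≤ N) (hj : 1 ≤ j) (hjN : j ≤ N) (hij : i ≠ j) :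
    Q m i * P n i * Q n j * P m j ∈ 𝒮 := by
  obtain rfl | hm1 := Nat.eq_zero_or_pos m
  · rw [h.P_zero j hj hjN, mul_assoc (Q 0 i)]
    exact mul_mem (mul_mem (h.Q_zero_mem hi hiN) (h.P_mul_Q_mem hn hi hiN hj hjN))
      (neg_mem (one_mem _))
  obtain rfl | hmn := eq_or_ne m n
  · rw [mul_assoc (Q m i * P m i)]
    exact mul_mem (h.Q_mul_P_mem hκ hm hiN hiN) (h.Q_mul_P_mem hκ hm hjN hjN)
  · rw [mul_assoc (Q m i), (h.commute_Q_P_mul_Q hm1 hm hn hmn hi hiN hj hjN hij).eq, mul_assoc]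
    exact mul_mem (h.P_mul_Q_mem hn hi hiN hj hjN) (h.Q_mul_P_mem hκ hm hiN hjN)

end IsFreeFieldRealization

end FreeField

theorem stmt8 (L N : ℕ)
    (e κ θ : ℕ → ℂ)
    (z : ℕ → ℂ)
    (hz0 : ∀ i, 1 ≤ i → i ≤ N → z i ≠ 0)
    (Q P : ℕ → ℕ → Module.End ℂ (MvPolynomial (Fin (L - 1) × Fin N) ℂ))
    (hQ : ∀ m i, ∀ hm : 1 ≤ m ∧ m ≤ L - 1, ∀ hi : 1 ≤ i ∧ i ≤ N,
      Q m i = LinearMap.mulLeft ℂ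
        (MvPolynomial.X (⟨m - 1, by omega⟩, ⟨i - 1, by omega⟩)))
    (hP : ∀ m i, ∀ hm : 1 ≤ m ∧ m ≤ L - 1, ∀ hi : 1 ≤ i ∧ i ≤ N,
      P m i = (MvPolynomial.pderiv (⟨m - 1, by omega⟩, ⟨i - 1, by omega⟩)).toLinearMap)
    (hQ0 : ∀ i, 1 ≤ i → i ≤ N →
      Q 0 i = θ i • (1 : Module.End ℂ (MvPolynomial (Fin (L - 1) × Fin N) ℂ))
        + ∑ m ∈ Finset.Icc 1 (L - 1), Q m i * P m i)
    (hP0 : ∀ i, 1 ≤ i → i ≤ N → P 0 i = -1)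
    (hQm0 : ∀ m, 1 ≤ m → m ≤ L - 1 → Q m 0 = -1)
    (hPm0 : ∀ m, 1 ≤ m → m ≤ L - 1 →
      P m 0 = κ m • (1 : Module.End ℂ (MvPolynomial (Fin (L - 1) × Fin N) ℂ))
        + ∑ i ∈ Finset.Icc 1 N, Q m i * P m i)
    (hQ00 : Q 0 0 = (κ 0 - ∑ i ∈ Finset.Icc 1 N, θ i) •
        (1 : Module.End ℂ (MvPolynomial (Fin (L - 1) × Fin N) ℂ))
      - ∑ i ∈ Finset.Icc 1 N, ∑ m ∈ Finset.Icc 1 (L - 1), Q m i * P m i)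
    (hP00 : P 0 0 = -1)
    (H : ℕ → Module.End ℂ (MvPolynomial (Fin (L - 1) × Fin N) ℂ))
    (hH : ∀ i, 1 ≤ i → i ≤ N → z i • H i =
      (∑ n ∈ Finset.range L, e n • (Q n i * P n i))
      + (∑ j ∈ Finset.range (N + 1), ∑ n ∈ Finset.range L, ∑ m ∈ Finset.range n,
          Q m i * P m j * Q n j * P n i)
      + (z i - 1)⁻¹ • (∑ m ∈ Finset.range L, ∑ n ∈ Finset.range L,
          Q m i * P m 0 * Q n 0 * P n i)
      + (∑ j ∈ (Finset.Icc 1 N).erase i, (z j / (z i - z j)) •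
          (∑ m ∈ Finset.range L, ∑ n ∈ Finset.range L, Q m i * P n i * Q n j * P m j))
      + (θ i * (e 0 + κ 0 - (∑ j ∈ Finset.Icc 1 N, θ j)
          - ∑ j ∈ (Finset.Icc 1 N).erase i, θ j * z j / (z i - z j))) •
          (1 : Module.End ℂ (MvPolynomial (Fin (L - 1) × Fin N) ℂ)))
    (T : ℕ → ℕ)
    (hκT : ∀ m, 1 ≤ m → m ≤ L - 1 → κ m = -(T m : ℂ)) :
    ∀ i, 1 ≤ i → i ≤ N → ∀ f : MvPolynomial (Fin (L - 1) × Fin N) ℂ,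
      (∀ d ∈ f.support, ∀ a : Fin (L - 1), (∑ b : Fin N, d (a, b)) ≤ T ((a : ℕ) + 1)) →
      (∀ d ∈ (H i f).support, ∀ a : Fin (L - 1),
        (∑ b : Fin N, d (a, b)) ≤ T ((a : ℕ) + 1)) := by
  intro i hi hiN f hf
  have h : IsFreeFieldRealization θ κ Q P :=
    ⟨fun m i hm hmL hi hiN => hQ m i ⟨hm, hmL⟩ ⟨hi, hiN⟩,
      fun m i hm hmL hi hiN => hP m i ⟨hm, hmL⟩ ⟨hi, hiN⟩, hQ0, hP0, hQm0, hPm0, hQ00, hP00⟩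
  have hzH : z i • H i ∈ rowBoundedStabilizer ℂ (fun a : Fin (L - 1) => T (a + 1)) := by
    rw [hH i hi hiN]
    refine add_mem (add_mem (add_mem (add_mem ?_ ?_) ?_) ?_) (Subalgebra.smul_mem _ (one_mem _) _)
    · exact sum_mem fun n hn => Subalgebra.smul_mem _
        (h.Q_mul_P_mem hκT (mem_range.mp hn) hiN hiN) _
    · exact sum_mem fun j hj => sum_mem fun n hn => sum_mem fun m hm =>
        h.Q_mul_P_mul_Q_mul_P_mem hκT ((mem_range.mp hm).trans (mem_range.mp hn))
          (mem_range.mp hn) hiN (Nat.lt_succ_iff.mp (mem_range.mp hj))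
    · exact Subalgebra.smul_mem _ (sum_mem fun m hm => sum_mem fun n hn =>
        h.Q_mul_P_mul_Q_mul_P_mem hκT (mem_range.mp hm) (mem_range.mp hn) hiN (Nat.zero_le N)) _
    · refine sum_mem fun j hj => Subalgebra.smul_mem _
        (sum_mem fun m hm => sum_mem fun n hn => ?_) _
      obtain ⟨hji, hj⟩ := mem_erase.mp hj
      obtain ⟨hj1, hjN⟩ := mem_Icc.mp hj
      exact h.Q_mul_P_mul_Q_mul_P_mem_of_ne hκT (mem_range.mp hm) (mem_range.mp hn) hi hiN hj1 hjN
        hji.symm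
  have hHi : H i ∈ rowBoundedStabilizer ℂ (fun a : Fin (L - 1) => T (a + 1)) := by
    simpa [smul_smul, inv_mul_cancel₀ (hz0 i hi hiN)] using Subalgebra.smul_mem _ hzH (z i)⁻¹
  exact hHi hf
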